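/- arXiv:2512.02553 — 3 statements merged into one kernel-verified Lean document; each statement's English description precedes it below -/
import Mathlib

section
/- Let p be a prime and G a finite group. Suppose that for every second maximal subgroup H of G with p dividing |H|, every maximal subgroup of G containing H is solvable. Then every maximal subgroup of G is p-solvable. -/
/-- A finite group is `p`-solvable if it has a normal series each of whose
factors is a `p`-group or a group of order coprime to `p`. -/
def IsPSolvable (p : ℕ) (G : Type*) [Group G] : Prop :=
  ∃ (n : ℕ) (s : Fin (n + 1) → Subgroup G),
    s 0 = ⊥ ∧ s (Fin.last n) = ⊤ ∧
    ∀ i : Fin n,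
      s i.castSucc ≤ s i.succ ∧
      ((s i.castSucc).subgroupOf (s i.succ)).Normal ∧
      ((∃ k : ℕ, Nat.card ((s i.succ) ⧸ (s i.castSucc).subgroupOf (s i.succ)) = p ^ k) ∨
        ¬ p ∣ Nat.card ((s i.succ) ⧸ (s i.castSucc).subgroupOf (s i.succ)))

/-- `H` is a second maximal subgroup of `G`: it is a maximal subgroup of some
maximal subgroup of `G`. -/
def IsSecondMaximal {G : Type*} [Group G] (H : Subgroup G) : Prop :=
  ∃ M : Subgroup G, IsCoatom M ∧ H ≤ M ∧ IsCoatom (H.subgroupOf M)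

/-!
If a maximal subgroup `M` of `G` has a maximal subgroup `K` with `p ∣ |K|`, then `K` is second
maximal in `G`, so `M` is solvable, and solvable groups are `p`-solvable: induct along the
commutator subgroup, splitting the abelian quotient through its normal Sylow `p`-subgroup.
Otherwise a Sylow `p`-subgroup of `M` lies in no maximal subgroup of `M`, so either it is all of
`M` or it is trivial, i.e. `M` is a `p`-group or a `p'`-group.
-/

open scoped SetRel

namespace Subgroup

variable {G : Type*} [Group G]

/-- The steps of `IsPSolvable`, phrased through `normalizer` and `relIndex` rather than
`subgroupOf`, because these transport along `map` and `comap`. -/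
def pSolvableStep (p : ℕ) : SetRel (Subgroup G) (Subgroup G) :=
  {AB | AB.1 ≤ AB.2 ∧ AB.2 ≤ normalizer AB.1 ∧
    ((∃ k : ℕ, AB.1.relIndex AB.2 = p ^ k) ∨ ¬ p ∣ AB.1.relIndex AB.2)}

variable {p : ℕ}

theorem pSolvableStep_map {H : Type*} [Group H] {f : G →* H} (hf : Function.Injective f)
    {A B : Subgroup G} (h : A ~[pSolvableStep p] B) :
    A.map f ~[pSolvableStep p] B.map f := by
  obtain ⟨hAB, hBA, hidx⟩ := h
  refine ⟨map_mono hAB, (map_mono hBA).trans (le_normalizer_map f), ?_⟩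
  rwa [relIndex_map_map_of_injective A B hf]

theorem pSolvableStep_comap {H : Type*} [Group H] {f : H →* G} (hf : Function.Surjective f)
    {A B : Subgroup G} (h : A ~[pSolvableStep p] B) :
    A.comap f ~[pSolvableStep p] B.comap f := by
  obtain ⟨hAB, hBA, hidx⟩ := h
  refine ⟨comap_mono hAB, (comap_mono hBA).trans (le_normalizer_comap f), ?_⟩
  rwa [relIndex_comap, map_comap_eq_self_of_surjective hf]

end Subgroup

section

open Subgroup

variable {p : ℕ} {G : Type*} [Group G]

theorem isPSolvable_iff_exists_relSeries :
    IsPSolvable p G ↔ ∃ s : RelSeries (pSolvableStep (G := G) p), s.head = ⊥ ∧ s.last = ⊤ := by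
  have step {A B : Subgroup G} : A ~[pSolvableStep p] B ↔ A ≤ B ∧ (A.subgroupOf B).Normal ∧
      ((∃ k : ℕ, Nat.card (B ⧸ A.subgroupOf B) = p ^ k) ∨
        ¬ p ∣ Nat.card (B ⧸ A.subgroupOf B)) := by
    refine ⟨fun ⟨hAB, hBA, hidx⟩ => ⟨hAB, (normal_subgroupOf_iff_le_normalizer hAB).2 hBA, hidx⟩,
      fun ⟨hAB, hN, hidx⟩ => ⟨hAB, (normal_subgroupOf_iff_le_normalizer hAB).1 hN, hidx⟩⟩
  constructor
  · rintro ⟨n, s, h0, hl, hs⟩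
    exact ⟨⟨n, s, fun i => step.2 (hs i)⟩, h0, hl⟩
  · rintro ⟨s, h0, hl⟩
    exact ⟨s.length, s, h0, hl, fun i => step.1 (s.step i)⟩

theorem isPSolvable_of_card (h : (∃ k : ℕ, Nat.card G = p ^ k) ∨ ¬ p ∣ Nat.card G) :
    IsPSolvable p G := by
  have hstep : (⊥ : Subgroup G) ~[pSolvableStep p] ⊤ := by
    refine ⟨bot_le, le_normalizer_of_normal, ?_⟩
    rwa [relIndex_bot_left, card_top]
  exact isPSolvable_iff_exists_relSeries.2
    ⟨(RelSeries.singleton _ ⊥).snoc ⊤ hstep, rfl, RelSeries.last_snoc _ _ _⟩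

theorem isPSolvable_of_normal (N : Subgroup G) [N.Normal] (hN : IsPSolvable p N)
    (hQ : IsPSolvable p (G ⧸ N)) : IsPSolvable p G := by
  obtain ⟨s, hs0, hsl⟩ := isPSolvable_iff_exists_relSeries.1 hN
  obtain ⟨t, ht0, htl⟩ := isPSolvable_iff_exists_relSeries.1 hQ
  let s' := s.map ⟨map N.subtype, pSolvableStep_map N.subtype_injective⟩
  let t' := t.map
    ⟨comap (QuotientGroup.mk' N), pSolvableStep_comap (QuotientGroup.mk'_surjective N)⟩
  have hs'l : s'.last = N := by simp [s', hsl, ← MonoidHom.range_eq_map]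
  have ht'0 : t'.head = N := by simp [t', ht0]
  refine isPSolvable_iff_exists_relSeries.2 ⟨s'.smash t' (hs'l.trans ht'0.symm), ?_, ?_⟩
  · simp [s', hs0]
  · simp [t', htl]

theorem isPSolvable_of_commGroup {A : Type*} [CommGroup A] [Finite A] [Fact p.Prime] :
    IsPSolvable p A := by
  obtain ⟨P⟩ := (inferInstance : Nonempty (Sylow p A))
  refine isPSolvable_of_normal (P : Subgroup A) (isPSolvable_of_card (.inl P.2.exists_card_eq))
    (isPSolvable_of_card (.inr ?_))
  rw [← index_eq_card]
  exact P.not_dvd_index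

theorem isPSolvable_of_isSolvable [Finite G] [Fact p.Prime] [Group.IsSolvable G] :
    IsPSolvable p G := by
  induction hn : Nat.card G using Nat.strong_induction_on generalizing G with
  | _ n ih =>
  rcases subsingleton_or_nontrivial G with hG | hG
  · exact isPSolvable_of_card (.inl ⟨0, by rw [Nat.card_unique, pow_zero]⟩)
  obtain ⟨x, -, hx⟩ := SetLike.exists_of_lt (Group.IsSolvable.commutator_lt_top_of_nontrivial G)
  have hlt : Nat.card (commutator G) < n := hn ▸ Finite.card_subtype_lt hx
  exact isPSolvable_of_normal (commutator G) (ih _ hlt rfl)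
    (isPSolvable_of_commGroup (A := Abelianization G))

theorem exists_card_eq_pow_or_not_dvd_card [Finite G] [Fact p.Prime]
    (h : ∀ K : Subgroup G, IsCoatom K → ¬ p ∣ Nat.card K) :
    (∃ k : ℕ, Nat.card G = p ^ k) ∨ ¬ p ∣ Nat.card G := by
  refine (em (p ∣ Nat.card G)).imp_left fun hdvd => ?_
  obtain ⟨P⟩ := (inferInstance : Nonempty (Sylow p G))
  rcases eq_top_or_exists_le_coatom (P : Subgroup G) with hP | ⟨K, hK, hPK⟩
  · rw [← card_top, ← hP]
    exact P.2.exists_card_eq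
  · exact absurd ((P.dvd_card_of_dvd_card hdvd).trans (card_dvd_of_le hPK)) (h K hK)

theorem isSecondMaximal_map_subtype {M : Subgroup G} (hM : IsCoatom M) {K : Subgroup M}
    (hK : IsCoatom K) : IsSecondMaximal (K.map M.subtype) :=
  ⟨M, hM, map_subtype_le K, by rwa [subgroupOf, comap_map_eq_self_of_injective M.subtype_injective]⟩

end

theorem stmt_8 {G : Type*} [Group G] [Finite G] (p : ℕ) (hp : p.Prime)
    (h : ∀ H : Subgroup G, IsSecondMaximal H → p ∣ Nat.card H →
      ∀ M : Subgroup G, IsCoatom M → H ≤ M → IsSolvable M) :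
    ∀ M : Subgroup G, IsCoatom M → IsPSolvable p M := by
  have : Fact p.Prime := ⟨hp⟩
  intro M hM
  by_cases hM' : ∀ K : Subgroup M, IsCoatom K → ¬ p ∣ Nat.card K
  · exact isPSolvable_of_card (exists_card_eq_pow_or_not_dvd_card hM')
  obtain ⟨K, hK, hpK⟩ : ∃ K : Subgroup M, IsCoatom K ∧ p ∣ Nat.card K := by simpa using hM'
  have : Group.IsSolvable M := h _ (isSecondMaximal_map_subtype hM hK)
    (by rwa [Subgroup.card_map_of_injective M.subtype_injective]) M hM (Subgroup.map_subtype_le K)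
  exact isPSolvable_of_isSolvable
end

section
/- Let G be a finite solvable group. Then every second maximal subgroup H of G satisfies: there exists a maximal subgroup M of G containing H with H_G < M_G. -/
/-!
Let `H < M₀ < G` with `M₀` maximal. By solvability some term `N` of the derived series of `G`
satisfies `N ≰ H` and `⁅N, N⁆ ≤ H`. If `HN < G`, any maximal subgroup `M ⊇ HN` has
`N ≤ M_G` but `N ≰ H_G`. If `HN = G`, then `N ∩ M₀` is normalized by `M₀` and, as
`⁅N, N⁆ ≤ M₀`, by `N`, hence is normal in `M₀N = G`; by Dedekind's law `M₀ = H(N ∩ M₀)`, so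
`N ∩ M₀ ≰ H`, and `N ∩ M₀ ≤ (M₀)_G` gives `H_G < (M₀)_G`.
-/

namespace Subgroup

variable {G : Type*} [Group G]

theorem exists_derivedSeries_not_le_and_succ_le [Group.IsSolvable G] {K : Subgroup G}
    (hK : K ≠ ⊤) : ∃ n, ¬derivedSeries G n ≤ K ∧ derivedSeries G (n + 1) ≤ K := by
  classical
  have hex : ∃ n, derivedSeries G n ≤ K := by
    obtain ⟨n, hn⟩ := Group.IsSolvable.solvable (G := G)
    exact ⟨n, hn ▸ bot_le⟩
  obtain ⟨n, hn⟩ : ∃ n, Nat.find hex = n + 1 := Nat.exists_eq_succ_of_ne_zero fun h =>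
    hK (top_le_iff.mp (derivedSeries_zero G ▸ h ▸ Nat.find_spec hex))
  exact ⟨n, Nat.find_min hex (by omega), hn ▸ Nat.find_spec hex⟩

theorem Normal.inf_of_commutator_le {N M : Subgroup G} [N.Normal] (hNM : ⁅N, N⁆ ≤ M)
    (hMN : M ⊔ N = ⊤) : (N ⊓ M).Normal := by
  rw [← normalizer_eq_top_iff, eq_top_iff, ← hMN]
  refine sup_le ?_ ?_
  · exact (le_inf le_normalizer_of_normal le_normalizer).trans inf_normalizer_le_normalizer_inf
  · rw [le_normalizer_iff_commutator_le_right]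
    exact le_inf (commutator_le_left N _) ((commutator_mono le_rfl inf_le_left).trans hNM)

open scoped Pointwise in
theorem normalCore_lt_normalCore_of_sup_eq_top {H M N : Subgroup G} [N.Normal] (hHM : H < M)
    (hNH : ⁅N, N⁆ ≤ H) (hHN : H ⊔ N = ⊤) : H.normalCore < M.normalCore := by
  have hMN : M ⊔ N = ⊤ := top_le_iff.mp (hHN ▸ sup_le_sup_right hHM.le N)
  have := Normal.inf_of_commutator_le (hNH.trans hHM.le) hMN
  refine (normalCore_mono hHM.le).lt_of_not_ge fun hMH => hHM.not_ge fun m hm => ?_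
  obtain ⟨h, hh, n, hn, rfl⟩ : m ∈ (H : Set G) * (N : Set G) := by rw [← mul_normal, hHN]; trivial
  have hnM : n ∈ N ⊓ M := ⟨hn, by simpa using M.mul_mem (M.inv_mem (hHM.le hh)) hm⟩
  exact H.mul_mem hh (H.normalCore_le (hMH (normal_le_normalCore.mpr inf_le_right hnM)))

theorem exists_isCoatom_normalCore_lt_of_sup_ne_top [IsCoatomic (Subgroup G)] {H N : Subgroup G}
    [N.Normal] (hNH : ¬N ≤ H) (hHN : H ⊔ N ≠ ⊤) :
    ∃ M, IsCoatom M ∧ H ≤ M ∧ H.normalCore < M.normalCore := by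
  obtain ⟨M, hM, hHNM⟩ := (eq_top_or_exists_le_coatom (H ⊔ N)).resolve_left hHN
  refine ⟨M, hM, le_sup_left.trans hHNM, (normalCore_mono (le_sup_left.trans hHNM)).lt_of_not_ge
    fun hMH => hNH ?_⟩
  exact normal_le_normalCore.mp ((normal_le_normalCore.mpr (le_sup_right.trans hHNM)).trans hMH)

end Subgroup

open Subgroup in
theorem stmt_12 {G : Type*} [Group G] [Finite G] (hG : IsSolvable G) :
    ∀ H : Subgroup G, IsSecondMaximal H →
      ∃ M : Subgroup G, IsCoatom M ∧ H ≤ M ∧ H.normalCore < M.normalCore := by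
  have : Group.IsSolvable G := hG
  rintro H ⟨M₀, hM₀, hHM₀, hH⟩
  replace hHM₀ : H < M₀ := hHM₀.lt_of_ne fun h => hH.1 (subgroupOf_eq_top.mpr h.ge)
  obtain ⟨n, hn, hn1⟩ := exists_derivedSeries_not_le_and_succ_le (hHM₀.trans_le le_top).ne
  by_cases hHN : H ⊔ derivedSeries G n = ⊤
  · exact ⟨M₀, hM₀, hHM₀.le,
      normalCore_lt_normalCore_of_sup_eq_top hHM₀ (derivedSeries_succ G n ▸ hn1) hHN⟩
  · exact exists_isCoatom_normalCore_lt_of_sup_ne_top hn hHN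
end

section
/- Let L be a finite group that is a direct product of n ≥ 1 pairwise isomorphic nonabelian simple groups A₁ × ⋯ × Aₙ, with all Aᵢ ≅ A. If L has maximal subgroups (or more generally proper subgroups) of index p^a and of index q^b, where p and q are distinct primes and a, b ≥ 1, then the simple group A possesses maximal subgroups of index p^{a'} and of index q^{b'} for some a', b' ≥ 1. -/
/-!
For a subgroup `K` of `A × B`, let `N = {a | (a, 1) ∈ K}`. Since `A × 1` is normal, `[A : N]`
divides `[A × B : K]`, and so does the index of the projection of `K` to `B`. If both indices
were `1`, then `K` would contain `A × 1` and project onto `B`, so `K = A × B`. Peeling off one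
factor at a time, a proper subgroup of `A ^ n` of index `p ^ a` yields a proper subgroup of `A`
whose index divides `p ^ a`, and a maximal subgroup above it has index a nontrivial power of `p`.
-/

def MulEquiv.piFinSucc (n : ℕ) (A : Fin (n + 1) → Type*) [∀ i, Mul (A i)] :
    (Π i, A i) ≃* A 0 × Π i : Fin n, A i.succ :=
  { (Fin.consEquiv A).symm with map_mul' := fun _ _ => rfl }

namespace Subgroup

variable {G : Type*} [Group G]

theorem relIndex_sup_left_of_normal [Finite G] (H K : Subgroup G) [K.Normal] :
    H.relIndex (H ⊔ K) = H.relIndex K := by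
  -- multiply both sides by `[H : H ⊓ K] = [H ⊔ K : K]`; each product is `[H ⊔ K : H ⊓ K]`
  have hK : K.relIndex H ≠ 0 := index_ne_zero_of_finite
  apply Nat.eq_of_mul_eq_mul_left (Nat.pos_of_ne_zero hK)
  have h₁ := relIndex_inf_mul_relIndex H K (H ⊔ K)
  have h₂ := relIndex_inf_mul_relIndex K H (H ⊔ K)
  rw [inf_of_le_left le_sup_right, relIndex_sup_right] at h₁
  rw [inf_of_le_left le_sup_left, inf_comm] at h₂
  rw [h₂, ← h₁, mul_comm]

theorem relIndex_dvd_index_of_normal_right [Finite G] (H K : Subgroup G) [K.Normal] :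
    H.relIndex K ∣ H.index :=
  relIndex_sup_left_of_normal H K ▸ relIndex_dvd_index_of_le le_sup_left

variable {A B : Type*} [Group A] [Group B]

theorem index_comap_inl_dvd [Finite A] [Finite B] (K : Subgroup (A × B)) :
    (K.comap (MonoidHom.inl A B)).index ∣ K.index := by
  have hrange : (MonoidHom.inl A B).range = (MonoidHom.snd A B).ker := by
    ext ⟨a, b⟩
    simp [mem_prod, eq_comm]
  rw [index_comap, hrange]
  exact relIndex_dvd_index_of_normal_right K _

theorem eq_top_of_comap_inl_eq_top_of_map_snd_eq_top {K : Subgroup (A × B)}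
    (hA : K.comap (MonoidHom.inl A B) = ⊤) (hB : K.map (MonoidHom.snd A B) = ⊤) : K = ⊤ := by
  refine eq_top_iff.mpr fun ⟨a, b⟩ _ => ?_
  obtain ⟨⟨a', b'⟩, hK, rfl⟩ := mem_map.mp (hB ▸ mem_top b)
  have hinl : a * a'⁻¹ ∈ K.comap (MonoidHom.inl A B) := hA ▸ mem_top _
  simpa using K.mul_mem hinl hK

theorem exists_ne_top_index_dvd_of_ne_top_prod [Finite A] [Finite B] {K : Subgroup (A × B)}
    (hK : K ≠ ⊤) :
    (∃ H : Subgroup A, H ≠ ⊤ ∧ H.index ∣ K.index) ∨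
      ∃ L : Subgroup B, L ≠ ⊤ ∧ L.index ∣ K.index := by
  by_cases hA : K.comap (MonoidHom.inl A B) = ⊤
  · exact .inr ⟨_, fun hB => hK (eq_top_of_comap_inl_eq_top_of_map_snd_eq_top hA hB),
      index_map_dvd _ Prod.snd_surjective⟩
  · exact .inl ⟨_, hA, index_comap_inl_dvd K⟩

theorem exists_ne_top_index_dvd_of_ne_top_pi {n : ℕ} {A : Fin n → Type*} [∀ i, Group (A i)]
    [∀ i, Finite (A i)] {K : Subgroup (Π i, A i)} (hK : K ≠ ⊤) :
    ∃ i, ∃ H : Subgroup (A i), H ≠ ⊤ ∧ H.index ∣ K.index := by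
  induction n with
  | zero => exact absurd (Subsingleton.elim K ⊤) hK
  | succ n ih =>
    let e := MulEquiv.piFinSucc n A
    have he : (K.map e.toMonoidHom).index = K.index := index_map_of_bijective e.bijective K
    have hne : K.map e.toMonoidHom ≠ ⊤ := fun h =>
      hK <| by
        rw [← comap_map_eq_self_of_injective (f := e.toMonoidHom) e.injective K, h, comap_top]
    rcases exists_ne_top_index_dvd_of_ne_top_prod hne with ⟨H, hH, hdvd⟩ | ⟨L, hL, hdvd⟩
    · exact ⟨0, H, hH, he ▸ hdvd⟩
    · obtain ⟨i, H, hH, hdvd'⟩ := ih hL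
      exact ⟨i.succ, H, hH, hdvd'.trans (he ▸ hdvd)⟩

theorem exists_isCoatom_index_eq_prime_pow_of_index_dvd [Finite G] {p a : ℕ} (hp : p.Prime)
    {H : Subgroup G} (hH : H ≠ ⊤) (hdvd : H.index ∣ p ^ a) :
    ∃ M : Subgroup G, IsCoatom M ∧ ∃ a' : ℕ, 1 ≤ a' ∧ M.index = p ^ a' := by
  obtain ⟨M, hM, hHM⟩ := (eq_top_or_exists_le_coatom H).resolve_left hH
  obtain ⟨a', -, hM_index⟩ := (Nat.dvd_prime_pow hp).mp ((index_dvd_of_le hHM).trans hdvd)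
  refine ⟨M, hM, a', Nat.one_le_iff_ne_zero.mpr fun ha' => hM.1 ?_, hM_index⟩
  rwa [ha', pow_zero, index_eq_one] at hM_index

theorem exists_isCoatom_index_eq_prime_pow_of_pi [Finite A] {n p a : ℕ} (hp : p.Prime)
    (ha : 1 ≤ a) {K : Subgroup (Fin n → A)} (hK : K.index = p ^ a) :
    ∃ H : Subgroup A, IsCoatom H ∧ ∃ a' : ℕ, 1 ≤ a' ∧ H.index = p ^ a' := by
  have hK_ne : K ≠ ⊤ := fun h => by
    rw [h, index_top, eq_comm, Nat.pow_eq_one] at hK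
    exact hK.elim hp.ne_one (by omega)
  obtain ⟨-, H, hH, hdvd⟩ := exists_ne_top_index_dvd_of_ne_top_pi hK_ne
  exact exists_isCoatom_index_eq_prime_pow_of_index_dvd hp hH (hK ▸ hdvd)

end Subgroup

theorem stmt_13_general {A : Type*} [Group A] [Finite A]
    (n : ℕ) (p q : ℕ) (hp : p.Prime) (hq : q.Prime)
    (a b : ℕ) (ha : 1 ≤ a) (hb : 1 ≤ b)
    (K₁ K₂ : Subgroup (Fin n → A))
    (hK₁ : K₁.index = p ^ a) (hK₂ : K₂.index = q ^ b) :
    (∃ H : Subgroup A, IsCoatom H ∧ ∃ a' : ℕ, 1 ≤ a' ∧ H.index = p ^ a') ∧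
      (∃ H : Subgroup A, IsCoatom H ∧ ∃ b' : ℕ, 1 ≤ b' ∧ H.index = q ^ b') :=
  ⟨Subgroup.exists_isCoatom_index_eq_prime_pow_of_pi hp ha hK₁,
    Subgroup.exists_isCoatom_index_eq_prime_pow_of_pi hq hb hK₂⟩

theorem stmt_13 {A : Type*} [Group A] [Finite A] [IsSimpleGroup A]
    (hA : ∃ a b : A, a * b ≠ b * a)
    (n : ℕ) (hn : 1 ≤ n) (p q : ℕ) (hp : p.Prime) (hq : q.Prime) (hpq : p ≠ q)
    (a b : ℕ) (ha : 1 ≤ a) (hb : 1 ≤ b)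
    (K₁ K₂ : Subgroup (Fin n → A))
    (hK₁ : K₁.index = p ^ a) (hK₂ : K₂.index = q ^ b) :
    (∃ H : Subgroup A, IsCoatom H ∧ ∃ a' : ℕ, 1 ≤ a' ∧ H.index = p ^ a') ∧
      (∃ H : Subgroup A, IsCoatom H ∧ ∃ b' : ℕ, 1 ≤ b' ∧ H.index = q ^ b') :=
  stmt_13_general n p q hp hq a b ha hb K₁ K₂ hK₁ hK₂
end
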